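/- arXiv:2412.11048 — 2 statements merged into one kernel-verified Lean document; each statement's English description precedes it below -/
import Mathlib

section
/- Let ℓ be a prime and let m, k be positive integers with m/2 < k ≤ m. Let A be an additively written abelian group equipped with a Weil-type pairing family (e_n) with values in a commutative group M. Let K be a subgroup of A such that ℓ^k·a = 0 for every a ∈ K, and such that K is isotropic for e_{ℓ^m}, i.e. e_{ℓ^m}(a, a') = 1 for all a, a' ∈ K. Then the subgroup ℓ^{k−1}·K is contained in the ℓ-torsion of A and is isotropic for e_ℓ: for all a, a' ∈ K one has e_ℓ(ℓ^{k−1}·a, ℓ^{k−1}·a') = 1. -/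
/-- Let `ℓ` be a prime and `m, k` positive integers with `m/2 < k ≤ m`. Let `A` be an abelian
group with a Weil-type pairing family `e` valued in a commutative group `M`. If `K` is a
subgroup of `A` killed by `ℓ^k` and isotropic for `e (ℓ^m)`, then `ℓ^(k-1) • K` lies in the
`ℓ`-torsion of `A` and is isotropic for `e ℓ`. -/
theorem nonsimple_abelian_stmt0
    {A : Type*} [AddCommGroup A] {M : Type*} [CommGroup M]
    (e : ℕ → A → A → M)
    (hweil : ∀ s t : ℕ, 0 < s → 0 < t → ∀ x y : A,
      (s * t) • x = 0 → (s * t) • y = 0 → (e (s * t) x y) ^ t = e s (t • x) (t • y))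
    (hres : ∀ s t : ℕ, 0 < s → 0 < t → ∀ x y : A,
      s • x = 0 → s • y = 0 → e (s * t) x y = (e s x y) ^ t)
    (ℓ : ℕ) (hℓ : ℓ.Prime) (m k : ℕ) (hm : 0 < m) (hk : 0 < k)
    (hmk : m < 2 * k) (hkm : k ≤ m)
    (K : AddSubgroup A)
    (hkill : ∀ a ∈ K, (ℓ ^ k) • a = 0)
    (hiso : ∀ a ∈ K, ∀ a' ∈ K, e (ℓ ^ m) a a' = 1) :
    (∀ a ∈ K, ℓ • ((ℓ ^ (k - 1)) • a) = 0) ∧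
    (∀ a ∈ K, ∀ a' ∈ K, e ℓ ((ℓ ^ (k - 1)) • a) ((ℓ ^ (k - 1)) • a') = 1) := by
  have hk1 : ℓ * ℓ ^ (k - 1) = ℓ ^ k := by
    rw [← pow_succ']; congr 1; omega
  constructor
  · intro a ha
    rw [← mul_smul, hk1]; exact hkill a ha
  · intro a ha a' ha'
    have h1 := hweil ℓ (ℓ ^ (k - 1)) hℓ.pos (pow_pos hℓ.pos _) a a'
      (by rw [hk1]; exact hkill a ha) (by rw [hk1]; exact hkill a' ha')
    have h2 := hres (ℓ ^ k) (ℓ ^ (m - k)) (pow_pos hℓ.pos _) (pow_pos hℓ.pos _) a a'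
      (hkill a ha) (hkill a' ha')
    have hm' : ℓ ^ k * ℓ ^ (m - k) = ℓ ^ m := by rw [← pow_add]; congr 1; omega
    rw [hm', hiso a ha a' ha'] at h2
    rw [← h1, hk1]
    have hsplit : ℓ ^ (k - 1) = ℓ ^ (m - k) * ℓ ^ (k - 1 - (m - k)) := by
      rw [← pow_add]; congr 1; omega
    rw [hsplit, pow_mul, ← h2, one_pow]
end

section
/- Let g, d, κ be positive integers and let C₁, C₂, C₃ be positive real numbers. Then there exist a real constant C > 0 (depending only on g, κ, C₁, C₂, C₃) and a real B₀ > e (depending only on g, C₃) such that for every real B ≥ B₀ and every prime ℓ satisfying (log B)^{2/(g²+g)} ≤ ℓ ≤ 2·(log B)^{2/(g²+g)}, one has C₁ · d² · (∏_{i=1}^{g}(ℓ^i + 1))² · (ℓ^{4g} · B^{9d})^{C₂ / (d·∏_{i=1}^{g}(ℓ^i + 1))} · (C₃ + 4g·log ℓ + 9d·log B)^{κ} ≤ C · d^{κ+2} · (log B)^{κ+2}. -/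
open Real

private lemma two_mul_sum_range (g : ℕ) :
    2 * ∑ i ∈ Finset.range g, (i + 1) = g * (g + 1) := by
  induction g with
  | zero => simp
  | succ n ih => rw [Finset.sum_range_succ, Nat.mul_add, ih]; ring

set_option maxHeartbeats 1000000 in
/-- The optimization in Case II (`ℋ = ℋ_p` or `ℋ_m`) of the proof of the main theorem:
given a positive integer `g`, a positive integer `κ` and positive reals `C₁, C₂, C₃`,
there are constants `C > 0` (depending only on `g, κ, C₁, C₂, C₃`) and `B₀ > e`
(depending only on `g, C₃`) such that for every positive integer `d`, every real
`B ≥ B₀`, and every prime `ℓ` with `(log B)^(2/(g²+g)) ≤ ℓ ≤ 2 (log B)^(2/(g²+g))`,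
`C₁ d² (∏_{i=1}^g (ℓ^i+1))² (ℓ^{4g} B^{9d})^{C₂/(d ∏_{i=1}^g (ℓ^i+1))}
  (C₃ + 4g log ℓ + 9d log B)^κ ≤ C d^{κ+2} (log B)^{κ+2}`. -/
theorem nonsimple_abelian_stmt8 (g κ : ℕ) (hg : 0 < g) (hκ : 0 < κ)
    (C₁ C₂ C₃ : ℝ) (hC₁ : 0 < C₁) (hC₂ : 0 < C₂) (hC₃ : 0 < C₃) :
    ∃ C : ℝ, 0 < C ∧ ∃ B₀ : ℝ, Real.exp 1 < B₀ ∧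
      ∀ d : ℕ, 0 < d → ∀ B : ℝ, B₀ ≤ B → ∀ ℓ : ℕ, ℓ.Prime →
        (Real.log B) ^ ((2 : ℝ) / ((g : ℝ) ^ 2 + g)) ≤ (ℓ : ℝ) →
        (ℓ : ℝ) ≤ 2 * (Real.log B) ^ ((2 : ℝ) / ((g : ℝ) ^ 2 + g)) →
        C₁ * (d : ℝ) ^ 2 * (∏ i ∈ Finset.range g, ((ℓ : ℝ) ^ (i + 1) + 1)) ^ 2 *
            ((ℓ : ℝ) ^ (4 * g) * B ^ (9 * d)) ^
              (C₂ / ((d : ℝ) * ∏ i ∈ Finset.range g, ((ℓ : ℝ) ^ (i + 1) + 1))) *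
            (C₃ + 4 * (g : ℝ) * Real.log ℓ + 9 * (d : ℝ) * Real.log B) ^ κ ≤
          C * (d : ℝ) ^ (κ + 2) * (Real.log B) ^ (κ + 2) := by
  set S : ℕ := ∑ i ∈ Finset.range g, (i + 1) with hSdef
  refine ⟨C₁ * ((2 : ℝ) ^ (g + S)) ^ 2 * Real.exp (C₂ * (4 * g + 9)) *
      (C₃ + 4 * g + 9) ^ κ, by positivity, Real.exp 2, ?_, ?_⟩
  · exact Real.exp_lt_exp.mpr one_lt_two
  intro d hd B hB ℓ hℓp h1 h2
  have hgR : (1 : ℝ) ≤ g := by exact_mod_cast hg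
  have hdR : (1 : ℝ) ≤ d := by exact_mod_cast hd
  have hB0 : (0 : ℝ) < B := lt_of_lt_of_le (Real.exp_pos 2) hB
  have hL2 : (2 : ℝ) ≤ Real.log B := by
    calc (2 : ℝ) = Real.log (Real.exp 2) := (Real.log_exp 2).symm
    _ ≤ Real.log B := Real.log_le_log (Real.exp_pos 2) hB
  set L := Real.log B with hLdef
  have hL1 : (1 : ℝ) ≤ L := le_trans one_le_two hL2
  have hL0 : (0 : ℝ) < L := lt_of_lt_of_le one_pos hL1
  set α : ℝ := 2 / ((g : ℝ) ^ 2 + g) with hαdef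
  have hden : (0 : ℝ) < (g : ℝ) ^ 2 + g := by nlinarith
  have hα0 : 0 < α := by positivity
  have hα1 : α ≤ 1 := by
    rw [hαdef, div_le_one hden]; nlinarith
  have hℓ2 : (2 : ℝ) ≤ ℓ := by exact_mod_cast hℓp.two_le
  have hℓ1 : (1 : ℝ) ≤ ℓ := le_trans one_le_two hℓ2
  have hℓ0 : (0 : ℝ) < ℓ := lt_of_lt_of_le one_pos hℓ1
  have hαS : α * (S : ℝ) = 1 := by
    have h2S : (2 : ℝ) * (S : ℝ) = (g : ℝ) * (g + 1) := by
      exact_mod_cast congrArg (Nat.cast : ℕ → ℝ) (two_mul_sum_range g)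
    rw [hαdef]
    field_simp
    nlinarith
  set P : ℝ := ∏ i ∈ Finset.range g, ((ℓ : ℝ) ^ (i + 1) + 1) with hPdef
  have hprod_pow : ∏ i ∈ Finset.range g, (ℓ : ℝ) ^ (i + 1) = (ℓ : ℝ) ^ S := by
    rw [hSdef, Finset.prod_pow_eq_pow_sum]
  have hLαS : (L ^ α) ^ (S : ℕ) = L := by
    rw [← Real.rpow_natCast (L ^ α) S, ← Real.rpow_mul hL0.le, hαS, Real.rpow_one]
  have hP_lb : L ≤ P := by
    calc L = (L ^ α) ^ (S : ℕ) := hLαS.symm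
    _ ≤ (ℓ : ℝ) ^ S := pow_le_pow_left₀ (Real.rpow_nonneg hL0.le α) h1 S
    _ = ∏ i ∈ Finset.range g, (ℓ : ℝ) ^ (i + 1) := hprod_pow.symm
    _ ≤ P := by
        apply Finset.prod_le_prod
        · intro i _; positivity
        · intro i _; linarith [pow_nonneg hℓ0.le (i + 1)]
  have hP_ub : P ≤ 2 ^ (g + S) * L := by
    calc P ≤ ∏ i ∈ Finset.range g, (2 * (ℓ : ℝ) ^ (i + 1)) := by
          apply Finset.prod_le_prod
          · intro i _; positivity
          · intro i _
            have : (1 : ℝ) ≤ (ℓ : ℝ) ^ (i + 1) := one_le_pow₀ hℓ1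
            linarith
    _ = 2 ^ g * (ℓ : ℝ) ^ S := by
          rw [Finset.prod_mul_distrib, Finset.prod_const, Finset.card_range, hprod_pow]
    _ ≤ 2 ^ g * (2 * L ^ α) ^ S :=
          mul_le_mul_of_nonneg_left (pow_le_pow_left₀ hℓ0.le h2 S) (by positivity)
    _ = 2 ^ (g + S) * L := by
          rw [mul_pow, hLαS, pow_add]; ring
  have hP_pos : (0 : ℝ) < P := lt_of_lt_of_le hL0 hP_lb
  have hlogℓ0 : 0 ≤ Real.log ℓ := Real.log_nonneg hℓ1
  have hlogℓ : Real.log ℓ ≤ L := by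
    have h2Lα : (0 : ℝ) < 2 * L ^ α := by positivity
    have hlog1 : Real.log ℓ ≤ Real.log (2 * L ^ α) :=
      Real.log_le_log hℓ0 h2
    have hlog2 : Real.log (2 * L ^ α) = Real.log 2 + α * Real.log L := by
      rw [Real.log_mul two_ne_zero (by positivity), Real.log_rpow hL0]
    have hlogL0 : 0 ≤ Real.log L := Real.log_nonneg hL1
    have hαL : α * Real.log L ≤ Real.log L := by nlinarith
    have hlogLL : Real.log L ≤ L - 1 := Real.log_le_sub_one_of_pos hL0
    have h2lt : Real.log 2 < 1 := by
      have := Real.log_two_lt_d9; linarith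
    linarith [hlog1, hlog2 ▸ hlog1]
  -- exponential factor bound
  have hbase_pos : (0 : ℝ) < (ℓ : ℝ) ^ (4 * g) * B ^ (9 * d) := by positivity
  have hlogbase : Real.log ((ℓ : ℝ) ^ (4 * g) * B ^ (9 * d)) =
      4 * g * Real.log ℓ + 9 * d * L := by
    rw [Real.log_mul (by positivity) (by positivity), Real.log_pow, Real.log_pow]
    push_cast; ring
  have hdL0 : (0 : ℝ) < (d : ℝ) * L := by positivity
  have hE : ((ℓ : ℝ) ^ (4 * g) * B ^ (9 * d)) ^ (C₂ / ((d : ℝ) * P)) ≤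
      Real.exp (C₂ * (4 * g + 9)) := by
    rw [Real.rpow_def_of_pos hbase_pos]
    apply Real.exp_le_exp.mpr
    rw [hlogbase]
    have hdLlog : Real.log ℓ ≤ (d : ℝ) * L :=
      hlogℓ.trans (le_mul_of_one_le_left hL0.le hdR)
    have h9 : 4 * g * Real.log ℓ + 9 * d * L ≤ (4 * g + 9) * ((d : ℝ) * L) := by
      have := mul_le_mul_of_nonneg_left hdLlog (by positivity : (0:ℝ) ≤ 4 * (g:ℝ))
      linarith
    have hdiv : C₂ / ((d : ℝ) * P) ≤ C₂ / ((d : ℝ) * L) := by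
      gcongr
    calc (4 * g * Real.log ℓ + 9 * d * L) * (C₂ / ((d : ℝ) * P))
        ≤ (4 * g + 9) * ((d : ℝ) * L) * (C₂ / ((d : ℝ) * L)) := by
          apply mul_le_mul h9 hdiv (by positivity)
          positivity
    _ = C₂ * (4 * g + 9) := by field_simp
  have hdLlog' : Real.log ℓ ≤ (d : ℝ) * L :=
    hlogℓ.trans (le_mul_of_one_le_left hL0.le hdR)
  have hdL1 : (1 : ℝ) ≤ (d : ℝ) * L := one_le_mul_of_one_le_of_one_le hdR hL1
  have hF : C₃ + 4 * g * Real.log ℓ + 9 * d * L ≤ (C₃ + 4 * g + 9) * ((d : ℝ) * L) := by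
    have h4 := mul_le_mul_of_nonneg_left hdLlog' (by positivity : (0:ℝ) ≤ 4 * (g:ℝ))
    have hc3 : C₃ ≤ C₃ * ((d : ℝ) * L) := le_mul_of_one_le_right hC₃.le hdL1
    linarith
  calc C₁ * (d : ℝ) ^ 2 * P ^ 2 *
        ((ℓ : ℝ) ^ (4 * g) * B ^ (9 * d)) ^ (C₂ / ((d : ℝ) * P)) *
        (C₃ + 4 * (g : ℝ) * Real.log ℓ + 9 * (d : ℝ) * L) ^ κ
      ≤ C₁ * (d : ℝ) ^ 2 * (2 ^ (g + S) * L) ^ 2 * Real.exp (C₂ * (4 * g + 9)) *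
        ((C₃ + 4 * g + 9) * ((d : ℝ) * L)) ^ κ := by
        gcongr
  _ = C₁ * ((2 : ℝ) ^ (g + S)) ^ 2 * Real.exp (C₂ * (4 * g + 9)) *
        (C₃ + 4 * g + 9) ^ κ * (d : ℝ) ^ (κ + 2) * L ^ (κ + 2) := by
        rw [mul_pow, mul_pow]; ring
end
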